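/- arXiv:2309.16489 — 3 statements merged into one kernel-verified Lean document; each statement's English description precedes it below -/
import Mathlib

section
/- Let X : [0,T] → ℝ^d, let P^n = {0 = t^n_0 < ... < t^n_{N_n} = T} be a partition, and let X^n be the piecewise constant approximation X^n_t = X_T·1_{{T}}(t) + Σ_k X_{t^n_k}·1_{[t^n_k, t^n_{k+1})}(t). Define Λ^n_{s,t} = ∫_s^t X^n_{s,u} ⊗ d(X^n − X)_u (a finite sum, since X^n is piecewise constant). Then sup_{(s,t)∈Δ_T} |Λ^n_{s,t}| ≤ 2‖X‖_∞ ‖X^n − X‖_∞. -/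
open scoped ENNReal Classical
open Filter MeasureTheory ProbabilityTheory

noncomputable section

/-- The `p`-variation of a path `X` over `[0,T]`, as an extended nonnegative real:
`(sup over partitions of Σ ‖increment‖^p)^(1/p)`. -/
def epVar {E : Type*} [NormedAddCommGroup E] (X : ℝ → E) (p T : ℝ) : ℝ≥0∞ :=
  (⨆ (n : ℕ) (t : ℕ → ℝ) (_ : Monotone t) (_ : t 0 = 0) (_ : t n = T),
    ∑ i ∈ Finset.range n, ENNReal.ofReal (‖X (t (i + 1)) - X (t i)‖ ^ p)) ^ (1 / p)

/-- The `r`-variation of a two-parameter function `A` over `[0,T]`. -/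
def epVar2 {E : Type*} [NormedAddCommGroup E] (A : ℝ → ℝ → E) (r T : ℝ) : ℝ≥0∞ :=
  (⨆ (n : ℕ) (t : ℕ → ℝ) (_ : Monotone t) (_ : t 0 = 0) (_ : t n = T),
    ∑ i ∈ Finset.range n, ENNReal.ofReal (‖A (t i) (t (i + 1))‖ ^ r)) ^ (1 / r)

/-- Piecewise constant approximation of `X` along the partition `t 0 ≤ t 1 ≤ ... ≤ t N`. -/
def pcApprox {E : Type*} (X : ℝ → E) (N : ℕ) (t : ℕ → ℝ) (s : ℝ) : E :=
  X (t (Nat.findGreatest (fun k => t k ≤ s) N))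

/-- Tensor (outer) product of two Euclidean vectors, with the Frobenius (Euclidean) norm. -/
def tp2 {d e : ℕ} (v : EuclideanSpace ℝ (Fin d)) (w : EuclideanSpace ℝ (Fin e)) :
    EuclideanSpace ℝ (Fin d × Fin e) :=
  (WithLp.equiv 2 (Fin d × Fin e → ℝ)).symm (fun q => v q.1 * w q.2)

def tp {d : ℕ} (v w : EuclideanSpace ℝ (Fin d)) : EuclideanSpace ℝ (Fin d × Fin d) :=
  tp2 v w

/-- Clamping of `x` into the interval `[s,u]`. -/
def clamp (s u x : ℝ) : ℝ := max s (min x u)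

/-- The second-level lift `𝕏ⁿ_{s,u} = ∫_s^u (Xⁿ_r − Xⁿ_s) ⊗ dXⁿ_r` of a path `Xn` which is
piecewise constant along the partition `t`, written as a left-point Riemann-Stieltjes sum. -/
def pcLift {d : ℕ} (N : ℕ) (Xn : ℝ → EuclideanSpace ℝ (Fin d)) (t : ℕ → ℝ) (s u : ℝ) :
    EuclideanSpace ℝ (Fin d × Fin d) :=
  ∑ i ∈ Finset.range N,
    tp (Xn (clamp s u (t i)) - Xn s) (Xn (clamp s u (t (i + 1))) - Xn (clamp s u (t i)))

/-- The left-point Riemann sum `∫_0^u Xⁿ_r ⊗ dX_r = Σ_k X_{t_k} ⊗ (X_{t_{k+1}∧u} − X_{t_k∧u})`. -/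
def riemannSum {d : ℕ} (N : ℕ) (X : ℝ → EuclideanSpace ℝ (Fin d)) (t : ℕ → ℝ) (u : ℝ) :
    EuclideanSpace ℝ (Fin d × Fin d) :=
  ∑ k ∈ Finset.range N, tp (X (t k)) (X (min (t (k + 1)) u) - X (min (t k) u))

/-- The left-point Riemann sum `∫_s^u Xⁿ_{s,r} ⊗ dX_r`. -/
def mixedInt {d : ℕ} (N : ℕ) (X : ℝ → EuclideanSpace ℝ (Fin d)) (t : ℕ → ℝ) (s u : ℝ) :
    EuclideanSpace ℝ (Fin d × Fin d) :=
  ∑ i ∈ Finset.range N,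
    tp (pcApprox X N t (clamp s u (t i)) - pcApprox X N t s)
      (X (clamp s u (t (i + 1))) - X (clamp s u (t i)))

/-- A control function on the simplex `Δ_T`: nonnegative and superadditive. -/
def IsControl (T : ℝ) (w : ℝ → ℝ → ℝ) : Prop :=
  (∀ s t, 0 ≤ s → s ≤ t → t ≤ T → 0 ≤ w s t) ∧
  (∀ s u t, 0 ≤ s → s ≤ u → u ≤ t → t ≤ T → w s u + w u t ≤ w s t)

/-- Property (RIE) for a path `X` relative to `p ∈ (2,3)` and a sequence of partitions
`t n 0 ≤ ... ≤ t n (N n)` of `[0,T]` with vanishing mesh. -/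
structure PropertyRIE {d : ℕ} (p T : ℝ) (X : ℝ → EuclideanSpace ℝ (Fin d))
    (N : ℕ → ℕ) (t : ℕ → ℕ → ℝ) : Prop where
  mono : ∀ n, Monotone (t n)
  zero : ∀ n, t n 0 = 0
  top : ∀ n, t n (N n) = T
  mesh : ∀ ε > 0, ∃ m, ∀ n ≥ m, ∀ i < N n, t n (i + 1) - t n i < ε
  unif : TendstoUniformlyOn (fun n s => pcApprox X (N n) (t n) s) X atTop (Set.Icc 0 T)
  riemann : ∃ I : ℝ → EuclideanSpace ℝ (Fin d × Fin d),
    TendstoUniformlyOn (fun n u => riemannSum (N n) X (t n) u) I atTop (Set.Icc 0 T)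
  control : ∃ w : ℝ → ℝ → ℝ, IsControl T w ∧
    (∀ s u, 0 ≤ s → s ≤ u → u ≤ T → ‖X u - X s‖ ^ p ≤ w s u) ∧
    (∀ n, ∀ k ℓ : ℕ, k < ℓ → ℓ ≤ N n →
      ‖riemannSum (N n) X (t n) (t n ℓ) - riemannSum (N n) X (t n) (t n k) -
          tp (X (t n k)) (X (t n ℓ) - X (t n k))‖ ^ (p / 2) ≤ w (t n k) (t n ℓ))

/-!
Because `Xⁿ = X` at the partition points, the increment of `Xⁿ − X` between consecutive clamped
partition times vanishes unless `[t_i, t_{i+1})` contains the right endpoint `u` with `s < t_i`,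
and the first factor `Xⁿ_{s,t_i}` vanishes when `t_i ≤ s`. So at most one summand survives,
`(Xⁿ_{t_i} − Xⁿ_s) ⊗ (Xⁿ − X)_u`, whose norm is at most `2 ‖X‖_∞ ‖Xⁿ − X‖_∞`.
-/

lemma norm_tp {d : ℕ} (v w : EuclideanSpace ℝ (Fin d)) : ‖tp v w‖ = ‖v‖ * ‖w‖ := by
  simp only [tp, tp2, EuclideanSpace.norm_eq]
  rw [← Real.sqrt_mul (by positivity)]
  congr 1
  simp only [WithLp.equiv_symm_apply, PiLp.toLp_apply]
  rw [Fintype.sum_prod_type, Finset.sum_mul_sum]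
  simp [mul_pow]

@[simp]
lemma tp_zero_left {d : ℕ} (w : EuclideanSpace ℝ (Fin d)) : tp 0 w = 0 :=
  norm_eq_zero.1 (by simp [norm_tp])

@[simp]
lemma tp_zero_right {d : ℕ} (v : EuclideanSpace ℝ (Fin d)) : tp v 0 = 0 :=
  norm_eq_zero.1 (by simp [norm_tp])

section Clamp

variable {s u x : ℝ}

lemma clamp_of_le (hx : x ≤ s) : clamp s u x = s :=
  max_eq_left ((min_le_left _ _).trans hx)

lemma clamp_of_ge (hsu : s ≤ u) (hx : u ≤ x) : clamp s u x = u := by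
  rw [clamp, min_eq_right hx, max_eq_right hsu]

lemma clamp_of_mem (hs : s ≤ x) (hu : x ≤ u) : clamp s u x = x := by
  rw [clamp, min_eq_left hu, max_eq_right hs]

end Clamp

lemma Monotone.le_of_lt_of_lt_succ {t : ℕ → ℝ} (ht : Monotone t) {x : ℝ} {i j : ℕ}
    (hi : t i < x) (hj : x < t (j + 1)) : i ≤ j := by
  by_contra! hji
  exact (hi.trans hj).not_ge (ht hji)

lemma Monotone.eq_of_lt_of_lt_succ {t : ℕ → ℝ} (ht : Monotone t) {x : ℝ} {i j : ℕ}
    (hi : t i < x) (hi' : x < t (i + 1)) (hj : t j < x) (hj' : x < t (j + 1)) : i = j :=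
  le_antisymm (ht.le_of_lt_of_lt_succ hi hj') (ht.le_of_lt_of_lt_succ hj hi')

lemma norm_sum_le_of_ne_zero_unique {ι E : Type*} [SeminormedAddCommGroup E] (S : Finset ι)
    (f : ι → E) {C : ℝ} (hC : 0 ≤ C) (hf : ∀ i ∈ S, f i ≠ 0 → ‖f i‖ ≤ C)
    (huniq : ∀ i ∈ S, ∀ j ∈ S, f i ≠ 0 → f j ≠ 0 → i = j) : ‖∑ i ∈ S, f i‖ ≤ C := by
  by_cases h : ∀ i ∈ S, f i = 0
  · rwa [Finset.sum_eq_zero h, norm_zero]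
  obtain ⟨i, hiS, hi⟩ : ∃ i ∈ S, f i ≠ 0 := by simpa using h
  rw [Finset.sum_eq_single_of_mem i hiS fun j hjS hji =>
    by_contra fun hj => hji (huniq j hjS i hiS hj hi)]
  exact hf i hiS hi

section Pc

variable {E : Type*} {X : ℝ → E} {N : ℕ} {t : ℕ → ℝ}

lemma pcApprox_apply_partition (ht : Monotone t) {j : ℕ} (hj : j ≤ N) :
    pcApprox X N t (t j) = X (t j) := by
  have hle : j ≤ Nat.findGreatest (fun k => t k ≤ t j) N := Nat.le_findGreatest hj le_rfl
  have hge : t (Nat.findGreatest (fun k => t k ≤ t j) N) ≤ t j :=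
    Nat.findGreatest_spec (P := fun k => t k ≤ t j) hj le_rfl
  rw [pcApprox, le_antisymm hge (ht hle)]

lemma pcApprox_mem_image (ht : Monotone t) (x : ℝ) :
    pcApprox X N t x ∈ X '' Set.Icc (t 0) (t N) :=
  ⟨_, ⟨ht (Nat.zero_le _), ht (Nat.findGreatest_le N)⟩, rfl⟩

end Pc

/-- The `i`-th summand of the left-point Riemann–Stieltjes sum for `∫_s^u Y_{s,r} ⊗ dD_r` along
the partition `t`. -/
def leftPointTerm {d : ℕ} (Y D : ℝ → EuclideanSpace ℝ (Fin d)) (t : ℕ → ℝ) (s u : ℝ) (i : ℕ) :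
    EuclideanSpace ℝ (Fin d × Fin d) :=
  tp (Y (clamp s u (t i)) - Y s) (D (clamp s u (t (i + 1))) - D (clamp s u (t i)))

section LeftPointTerm

variable {d N i : ℕ} {Y D : ℝ → EuclideanSpace ℝ (Fin d)} {t : ℕ → ℝ} {s u : ℝ}

lemma leftPointTerm_eq_zero_of_not_straddle (ht : Monotone t) (hD : ∀ j ≤ N, D (t j) = 0)
    (hi : i < N) (hsu : s ≤ u) (h : ¬(s < t i ∧ t i < u ∧ u < t (i + 1))) :
    leftPointTerm Y D t s u i = 0 := by
  have hmono : t i ≤ t (i + 1) := ht i.le_succ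
  unfold leftPointTerm
  rcases le_or_gt (t i) s with his | hsi
  · simp [clamp_of_le his]
  rcases le_or_gt u (t i) with hui | hiu
  · simp [clamp_of_ge hsu hui, clamp_of_ge hsu (hui.trans hmono)]
  have hiu' : t (i + 1) ≤ u := le_of_not_gt fun h' => h ⟨hsi, hiu, h'⟩
  simp [clamp_of_mem hsi.le hiu.le, clamp_of_mem (hsi.le.trans hmono) hiu', hD i hi.le, hD _ hi]

lemma leftPointTerm_eq_of_straddle (hD : ∀ j ≤ N, D (t j) = 0) (hi : i < N)
    (h : s < t i ∧ t i < u ∧ u < t (i + 1)) :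
    leftPointTerm Y D t s u i = tp (Y (t i) - Y s) (D u) := by
  obtain ⟨hsi, hiu, hui⟩ := h
  rw [leftPointTerm, clamp_of_mem hsi.le hiu.le, clamp_of_ge (hsi.trans hiu).le hui.le,
    hD i hi.le, sub_zero]

end LeftPointTerm

theorem lambda_sup_bound_general (d : ℕ) (T : ℝ)
    (X : ℝ → EuclideanSpace ℝ (Fin d)) (N : ℕ) (t : ℕ → ℝ)
    (hmono : Monotone t) (h0 : t 0 = 0) (hN : t N = T)
    (MX MD : ℝ)
    (hMX : ∀ u ∈ Set.Icc (0 : ℝ) T, ‖X u‖ ≤ MX)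
    (hMD : ∀ u ∈ Set.Icc (0 : ℝ) T, ‖pcApprox X N t u - X u‖ ≤ MD) :
    ∀ s u : ℝ, 0 ≤ s → s ≤ u → u ≤ T →
      ‖∑ i ∈ Finset.range N,
          tp (pcApprox X N t (clamp s u (t i)) - pcApprox X N t s)
            ((pcApprox X N t (clamp s u (t (i + 1))) - X (clamp s u (t (i + 1)))) -
              (pcApprox X N t (clamp s u (t i)) - X (clamp s u (t i))))‖ ≤
        2 * MX * MD := by
  intro s u hs hsu huT
  have hY : ∀ x, ‖pcApprox X N t x‖ ≤ MX := fun x => by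
    obtain ⟨y, hy, hxy⟩ := pcApprox_mem_image (X := X) (N := N) hmono x
    rw [← hxy]
    exact hMX y (h0 ▸ hN ▸ hy)
  set Y := pcApprox X N t
  set D := fun x => Y x - X x
  have hD : ∀ j ≤ N, D (t j) = 0 := fun j hj => sub_eq_zero.2 (pcApprox_apply_partition hmono hj)
  have hMD_u : ‖D u‖ ≤ MD := hMD u ⟨hs.trans hsu, huT⟩
  have hstraddle : ∀ i ∈ Finset.range N, leftPointTerm Y D t s u i ≠ 0 →
      s < t i ∧ t i < u ∧ u < t (i + 1) := fun i hi hne =>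
    by_contra fun h =>
      hne (leftPointTerm_eq_zero_of_not_straddle hmono hD (Finset.mem_range.1 hi) hsu h)
  change ‖∑ i ∈ Finset.range N, leftPointTerm Y D t s u i‖ ≤ _
  have hC : 0 ≤ 2 * MX * MD :=
    mul_nonneg (mul_nonneg zero_le_two ((norm_nonneg _).trans (hY 0))) ((norm_nonneg _).trans hMD_u)
  refine norm_sum_le_of_ne_zero_unique _ _ hC (fun i hi hne => ?_) (fun i hi j hj hni hnj => ?_)
  · rw [leftPointTerm_eq_of_straddle hD (Finset.mem_range.1 hi) (hstraddle i hi hne), norm_tp]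
    have hYY : ‖Y (t i) - Y s‖ ≤ 2 * MX := (norm_sub_le _ _).trans (by linarith [hY (t i), hY s])
    exact mul_le_mul hYY hMD_u (norm_nonneg _) ((norm_nonneg _).trans hYY)
  · obtain ⟨-, hi₁, hi₂⟩ := hstraddle i hi hni
    obtain ⟨-, hj₁, hj₂⟩ := hstraddle j hj hnj
    exact hmono.eq_of_lt_of_lt_succ hi₁ hi₂ hj₁ hj₂

/-- the error term `Λⁿ_{s,t} = ∫_s^t Xⁿ_{s,u} ⊗ d(Xⁿ − X)_u` satisfies the
uniform bound `sup_{(s,t) ∈ Δ_T} |Λⁿ_{s,t}| ≤ 2 ‖X‖_∞ ‖Xⁿ − X‖_∞`. -/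
theorem lambda_sup_bound (d : ℕ) (T : ℝ) (hT : 0 ≤ T)
    (X : ℝ → EuclideanSpace ℝ (Fin d)) (N : ℕ) (t : ℕ → ℝ)
    (hmono : Monotone t) (h0 : t 0 = 0) (hN : t N = T)
    (MX MD : ℝ)
    (hMX : ∀ u ∈ Set.Icc (0 : ℝ) T, ‖X u‖ ≤ MX)
    (hMD : ∀ u ∈ Set.Icc (0 : ℝ) T, ‖pcApprox X N t u - X u‖ ≤ MD) :
    ∀ s u : ℝ, 0 ≤ s → s ≤ u → u ≤ T →
      ‖∑ i ∈ Finset.range N,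
          tp (pcApprox X N t (clamp s u (t i)) - pcApprox X N t s)
            ((pcApprox X N t (clamp s u (t (i + 1))) - X (clamp s u (t (i + 1)))) -
              (pcApprox X N t (clamp s u (t i)) - X (clamp s u (t i))))‖ ≤
        2 * MX * MD :=
  lambda_sup_bound_general d T X N t hmono h0 hN MX MD hMX hMD
end
end

section
/- Equivalence of pointwise and uniform convergence of discretizations: let P^n, n ∈ ℕ, be a sequence of partitions of [0,T] with mesh |P^n| → 0, let F : [0,T] → ℝ^d be càdlàg, and let F^n be the piecewise constant approximation of F along P^n. Denote by J_F = {t ∈ (0,T] : F_{t−} ≠ F_t} the jump times of F. Then the following are equivalent: (i) J_F ⊆ liminf_{n→∞} P^n := ∪_m ∩_{n≥m} P^n; (ii) F^n → F pointwise on [0,T]; (iii) F^n → F uniformly on [0,T]. -/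
open scoped ENNReal Classical
open Filter MeasureTheory ProbabilityTheory

noncomputable section

section AuxPC

/-- The index used in the piecewise constant approximation. -/
def pcIdx (N : ℕ) (t : ℕ → ℝ) (s : ℝ) : ℕ :=
  Nat.findGreatest (fun k => t k ≤ s) N

lemma pcIdx_le (N : ℕ) (t : ℕ → ℝ) (s : ℝ) : pcIdx N t s ≤ N :=
  Nat.findGreatest_le N

lemma t_pcIdx_le {N : ℕ} {t : ℕ → ℝ} (h0 : t 0 = 0) {s : ℝ} (hs : 0 ≤ s) :
    t (pcIdx N t s) ≤ s :=
  Nat.findGreatest_spec (P := fun k => t k ≤ s) (m := 0) (Nat.zero_le N)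
    (show t 0 ≤ s by rw [h0]; exact hs)

lemma le_t_pcIdx {N : ℕ} {t : ℕ → ℝ} (hm : Monotone t) {s : ℝ} {i : ℕ}
    (hi : i ≤ N) (hts : t i ≤ s) : t i ≤ t (pcIdx N t s) :=
  hm (Nat.le_findGreatest hi hts)

lemma pcIdx_gap {N : ℕ} {t : ℕ → ℝ} {s T ε : ℝ} (hs : s ≤ T)
    (htop : t N = T) (hε : 0 < ε) (hmesh : ∀ i < N, t (i + 1) - t i < ε) :
    s - t (pcIdx N t s) < ε := by
  rcases lt_or_eq_of_le (pcIdx_le N t s) with h | h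
  · have h1 : ¬ t (pcIdx N t s + 1) ≤ s :=
      Nat.findGreatest_is_greatest (Nat.lt_succ_self _) h
    have h2 := hmesh _ h
    push_neg at h1
    linarith
  · have : s ≤ t (pcIdx N t s) := by rw [h, htop]; exact hs
    linarith

lemma tendsto_t_pcIdx {T : ℝ} (N : ℕ → ℕ) (t : ℕ → ℕ → ℝ)
    (h0 : ∀ n, t n 0 = 0) (htop : ∀ n, t n (N n) = T)
    (hmesh : ∀ ε > 0, ∃ m, ∀ n ≥ m, ∀ i < N n, t n (i + 1) - t n i < ε)
    {φ : ℕ → ℕ} (hφ : StrictMono φ) {y : ℕ → ℝ} {s : ℝ}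
    (hy : Tendsto y atTop (nhds s)) (hy0 : ∀ j, 0 ≤ y j) (hyT : ∀ j, y j ≤ T) :
    Tendsto (fun j => t (φ j) (pcIdx (N (φ j)) (t (φ j)) (y j))) atTop (nhds s) := by
  rw [Metric.tendsto_atTop]
  intro ε hε
  obtain ⟨m, hm⟩ := hmesh (ε / 2) (by linarith)
  obtain ⟨m2, hm2⟩ := (Metric.tendsto_atTop.mp hy) (ε / 2) (by linarith)
  refine ⟨max m m2, fun j hj => ?_⟩
  have hφj : m ≤ φ j :=
    le_trans (le_trans (le_max_left _ _) hj) hφ.le_apply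
  have hgap := pcIdx_gap (hyT j) (htop (φ j)) (show (0:ℝ) < ε/2 by linarith) (hm _ hφj)
  have hle : t (φ j) (pcIdx (N (φ j)) (t (φ j)) (y j)) ≤ y j :=
    t_pcIdx_le (h0 (φ j)) (hy0 j)
  have hdy := hm2 j (le_trans (le_max_right _ _) hj)
  rw [Real.dist_eq, abs_lt] at hdy ⊢
  constructor <;> linarith [hdy.1, hdy.2]

end AuxPC

/-- for a càdlàg path `F` and partitions with vanishing mesh, exhaustion of the
jump times, pointwise convergence and uniform convergence of the piecewise constant
approximations are all equivalent. -/
theorem pc_convergence_tfae {E : Type*} [NormedAddCommGroup E] (T : ℝ) (hT : 0 < T)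
    (F : ℝ → E)
    (hrc : ∀ s ∈ Set.Ico (0 : ℝ) T, ContinuousWithinAt F (Set.Ici s) s)
    (hll : ∀ s ∈ Set.Ioc (0 : ℝ) T, ∃ L : E, Tendsto F (nhdsWithin s (Set.Iio s)) (nhds L))
    (N : ℕ → ℕ) (t : ℕ → ℕ → ℝ)
    (hmono : ∀ n, Monotone (t n)) (h0 : ∀ n, t n 0 = 0) (htop : ∀ n, t n (N n) = T)
    (hmesh : ∀ ε > 0, ∃ m, ∀ n ≥ m, ∀ i < N n, t n (i + 1) - t n i < ε) :
    ((∀ s ∈ Set.Ioc (0 : ℝ) T, ¬ Tendsto F (nhdsWithin s (Set.Iio s)) (nhds (F s)) →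
        ∃ m, ∀ n ≥ m, ∃ i ≤ N n, t n i = s) ↔
      (∀ s ∈ Set.Icc (0 : ℝ) T,
        Tendsto (fun n => pcApprox F (N n) (t n) s) atTop (nhds (F s)))) ∧
    ((∀ s ∈ Set.Icc (0 : ℝ) T,
        Tendsto (fun n => pcApprox F (N n) (t n) s) atTop (nhds (F s))) ↔
      TendstoUniformlyOn (fun n s => pcApprox F (N n) (t n) s) F atTop (Set.Icc 0 T)) := by
  have happrox : ∀ n s, pcApprox F (N n) (t n) s = F (t n (pcIdx (N n) (t n) s)) :=
    fun n s => rfl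
  have ht0 : ∀ n k, 0 ≤ t n k := by
    intro n k
    rw [← h0 n]
    exact hmono n (Nat.zero_le k)
  -- pointwise convergence implies exhaustion of jumps
  have key2 : (∀ s ∈ Set.Icc (0 : ℝ) T,
        Tendsto (fun n => pcApprox F (N n) (t n) s) atTop (nhds (F s))) →
      ∀ s ∈ Set.Ioc (0 : ℝ) T, ¬ Tendsto F (nhdsWithin s (Set.Iio s)) (nhds (F s)) →
      ∃ m, ∀ n ≥ m, ∃ i ≤ N n, t n i = s := by
    intro hPtw s hs hnl
    by_contra hcon
    push_neg at hcon
    obtain ⟨φ, hφ, hP⟩ := Filter.extraction_of_frequently_atTop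
      (Filter.frequently_atTop.mpr hcon)
    obtain ⟨L, hL⟩ := hll s hs
    have ha : Tendsto (fun j => t (φ j) (pcIdx (N (φ j)) (t (φ j)) s)) atTop (nhds s) :=
      tendsto_t_pcIdx N t h0 htop hmesh hφ tendsto_const_nhds
        (fun _ => hs.1.le) (fun _ => hs.2)
    have hlt : ∀ j, t (φ j) (pcIdx (N (φ j)) (t (φ j)) s) < s := by
      intro j
      rcases lt_or_eq_of_le (t_pcIdx_le (h0 (φ j)) hs.1.le) with h | h
      · exact h
      · exact absurd h (hP j _ (pcIdx_le _ _ _))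
    have h1 : Tendsto (fun j => F (t (φ j) (pcIdx (N (φ j)) (t (φ j)) s)))
        atTop (nhds L) :=
      hL.comp (tendsto_nhdsWithin_iff.mpr ⟨ha, Filter.Eventually.of_forall hlt⟩)
    have h2 : Tendsto (fun j => F (t (φ j) (pcIdx (N (φ j)) (t (φ j)) s)))
        atTop (nhds (F s)) :=
      ((hPtw s ⟨hs.1.le, hs.2⟩).comp hφ.tendsto_atTop).congr (fun j => happrox _ _)
    exact hnl (tendsto_nhds_unique h1 h2 ▸ hL)
  -- exhaustion implies pointwise convergence
  have key1 : (∀ s ∈ Set.Ioc (0 : ℝ) T, ¬ Tendsto F (nhdsWithin s (Set.Iio s)) (nhds (F s)) →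
        ∃ m, ∀ n ≥ m, ∃ i ≤ N n, t n i = s) →
      ∀ s ∈ Set.Icc (0 : ℝ) T,
        Tendsto (fun n => pcApprox F (N n) (t n) s) atTop (nhds (F s)) := by
    intro hExh s hs
    rcases eq_or_lt_of_le hs.1 with h0s | h0s
    · -- s = 0
      have hconst : ∀ n, pcApprox F (N n) (t n) s = F s := by
        intro n
        rw [happrox]
        congr 1
        have h1 : t n (pcIdx (N n) (t n) s) ≤ s := t_pcIdx_le (h0 n) hs.1
        have h2 : 0 ≤ t n (pcIdx (N n) (t n) s) := ht0 n _
        linarith [h0s.le]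
      exact Tendsto.congr (fun n => (hconst n).symm) tendsto_const_nhds
    · by_cases hjump : Tendsto F (nhdsWithin s (Set.Iio s)) (nhds (F s))
      · -- left continuous at s
        have haT : Tendsto (fun n => t n (pcIdx (N n) (t n) s)) atTop (nhds s) :=
          tendsto_t_pcIdx N t h0 htop hmesh strictMono_id tendsto_const_nhds
            (fun _ => hs.1) (fun _ => hs.2)
        have hIic : Tendsto F (nhdsWithin s (Set.Iic s)) (nhds (F s)) := by
          rw [← Set.Iio_union_right, nhdsWithin_union, nhdsWithin_singleton]
          exact tendsto_sup.mpr ⟨hjump, tendsto_pure_nhds F s⟩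
        have hmem : ∀ n, t n (pcIdx (N n) (t n) s) ∈ Set.Iic s :=
          fun n => t_pcIdx_le (h0 n) hs.1
        have := hIic.comp
          (tendsto_nhdsWithin_iff.mpr ⟨haT, Filter.Eventually.of_forall hmem⟩)
        exact this.congr (fun n => (happrox n s).symm)
      · -- jump at s: eventually s is a partition point
        obtain ⟨m, hm⟩ := hExh s ⟨h0s, hs.2⟩ hjump
        have heq : (fun _ : ℕ => F s) =ᶠ[atTop] fun n => pcApprox F (N n) (t n) s := by
          filter_upwards [Filter.eventually_ge_atTop m] with n hn
          obtain ⟨i, hiN, hti⟩ := hm n hn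
          have h1 : t n (pcIdx (N n) (t n) s) ≤ s := t_pcIdx_le (h0 n) hs.1
          have h2 : s ≤ t n (pcIdx (N n) (t n) s) := by
            have := le_t_pcIdx (hmono n) hiN (le_of_eq hti)
            rwa [hti] at this
          rw [happrox, le_antisymm h1 h2]
        exact tendsto_const_nhds.congr' heq
  -- pointwise implies uniform
  have key3 : (∀ s ∈ Set.Icc (0 : ℝ) T,
        Tendsto (fun n => pcApprox F (N n) (t n) s) atTop (nhds (F s))) →
      TendstoUniformlyOn (fun n s => pcApprox F (N n) (t n) s) F atTop (Set.Icc 0 T) := by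
    intro hPtw
    have hExh := key2 hPtw
    rw [Metric.tendstoUniformlyOn_iff]
    by_contra hcon
    push_neg at hcon
    obtain ⟨ε, hε, hne⟩ := hcon
    have hfr : ∃ᶠ n in atTop, ∃ x ∈ Set.Icc (0:ℝ) T,
        ε ≤ dist (F x) (pcApprox F (N n) (t n) x) := by
      have h2 := Filter.not_eventually.mp hne
      refine h2.mono fun n hn => ?_
      push_neg at hn
      exact hn
    obtain ⟨φ, hφ, hP⟩ := Filter.extraction_of_frequently_atTop hfr
    choose x hx hdist using hP
    obtain ⟨s, hsmem, ψ, hψ, hxs⟩ := isCompact_Icc.tendsto_subseq hx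
    set χ : ℕ → ℕ := fun j => φ (ψ j) with hχdef
    have hχm : StrictMono χ := hφ.comp hψ
    set y : ℕ → ℝ := fun j => x (ψ j) with hydef
    set a : ℕ → ℝ := fun j => t (χ j) (pcIdx (N (χ j)) (t (χ j)) (y j)) with hadef
    have hyIcc : ∀ j, y j ∈ Set.Icc (0:ℝ) T := fun j => hx (ψ j)
    have hys : Tendsto y atTop (nhds s) := hxs
    have haley : ∀ j, a j ≤ y j := fun j => t_pcIdx_le (h0 (χ j)) (hyIcc j).1
    have ha0 : ∀ j, 0 ≤ a j := fun j => ht0 _ _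
    have hat : Tendsto a atTop (nhds s) :=
      tendsto_t_pcIdx N t h0 htop hmesh hχm hys (fun j => (hyIcc j).1)
        (fun j => (hyIcc j).2)
    have hd : ∀ j, ε ≤ dist (F (y j)) (F (a j)) := by
      intro j
      have := hdist (ψ j)
      rwa [happrox] at this
    have htri : ∀ j, s ≤ a j ∨ y j < s ∨ (a j < s ∧ s ≤ y j) := by
      intro j
      rcases le_or_gt s (a j) with h | h
      · exact Or.inl h
      rcases lt_or_ge (y j) s with h2 | h2
      · exact Or.inr (Or.inl h2)
      · exact Or.inr (Or.inr ⟨h, h2⟩)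
    have hfr3 : ∃ᶠ j in (atTop : Filter ℕ), s ≤ a j ∨ y j < s ∨ (a j < s ∧ s ≤ y j) :=
      (Filter.Eventually.of_forall htri).frequently
    rw [Filter.frequently_or_distrib, Filter.frequently_or_distrib] at hfr3
    have hnot0 : ∀ u : ℕ → ℝ, (∀ j, ε ≤ u j) → ¬ Tendsto u atTop (nhds 0) := by
      intro u hu htend
      obtain ⟨j, hj⟩ := (htend.eventually (gt_mem_nhds hε)).exists
      exact absurd (hu j) (not_le.mpr hj)
    rcases hfr3 with hcase | hcase | hcase
    · -- frequently s ≤ a j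
      obtain ⟨ρ, hρ, hpr⟩ := Filter.extraction_of_frequently_atTop hcase
      have haρ : Tendsto (fun j => a (ρ j)) atTop (nhds s) := hat.comp hρ.tendsto_atTop
      have hyρ : Tendsto (fun j => y (ρ j)) atTop (nhds s) := hys.comp hρ.tendsto_atTop
      rcases eq_or_lt_of_le hsmem.2 with hsT | hsT
      · have h1 : a (ρ 0) = T :=
          le_antisymm (le_trans (haley _) (hyIcc _).2) (hsT ▸ hpr 0)
        have h2 : y (ρ 0) = T :=
          le_antisymm (hyIcc _).2 (hsT ▸ le_trans (hpr 0) (haley _))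
        have h3 := hd (ρ 0)
        rw [h1, h2, dist_self] at h3
        linarith
      · have hcont : Tendsto F (nhdsWithin s (Set.Ici s)) (nhds (F s)) :=
          hrc s ⟨hsmem.1, hsT⟩
        have hFa : Tendsto (fun j => F (a (ρ j))) atTop (nhds (F s)) :=
          hcont.comp (tendsto_nhdsWithin_iff.mpr
            ⟨haρ, Filter.Eventually.of_forall hpr⟩)
        have hFy : Tendsto (fun j => F (y (ρ j))) atTop (nhds (F s)) :=
          hcont.comp (tendsto_nhdsWithin_iff.mpr
            ⟨hyρ, Filter.Eventually.of_forall (fun j => le_trans (hpr j) (haley _))⟩)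
        have hdt : Tendsto (fun j => dist (F (y (ρ j))) (F (a (ρ j)))) atTop (nhds 0) := by
          simpa using hFy.dist hFa
        exact hnot0 _ (fun j => hd (ρ j)) hdt
    · -- frequently y j < s
      obtain ⟨ρ, hρ, hpr⟩ := Filter.extraction_of_frequently_atTop hcase
      have hspos : 0 < s := lt_of_le_of_lt (hyIcc (ρ 0)).1 (hpr 0)
      obtain ⟨L, hL⟩ := hll s ⟨hspos, hsmem.2⟩
      have haρ : Tendsto (fun j => a (ρ j)) atTop (nhds s) := hat.comp hρ.tendsto_atTop
      have hyρ : Tendsto (fun j => y (ρ j)) atTop (nhds s) := hys.comp hρ.tendsto_atTop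
      have hFa : Tendsto (fun j => F (a (ρ j))) atTop (nhds L) :=
        hL.comp (tendsto_nhdsWithin_iff.mpr
          ⟨haρ, Filter.Eventually.of_forall (fun j => lt_of_le_of_lt (haley _) (hpr j))⟩)
      have hFy : Tendsto (fun j => F (y (ρ j))) atTop (nhds L) :=
        hL.comp (tendsto_nhdsWithin_iff.mpr
          ⟨hyρ, Filter.Eventually.of_forall hpr⟩)
      have hdt : Tendsto (fun j => dist (F (y (ρ j))) (F (a (ρ j)))) atTop (nhds 0) := by
        simpa using hFy.dist hFa
      exact hnot0 _ (fun j => hd (ρ j)) hdt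
    · -- frequently a j < s ≤ y j
      obtain ⟨ρ, hρ, hpr⟩ := Filter.extraction_of_frequently_atTop hcase
      have hspos : 0 < s := lt_of_le_of_lt (ha0 (ρ 0)) (hpr 0).1
      obtain ⟨L, hL⟩ := hll s ⟨hspos, hsmem.2⟩
      have haρ : Tendsto (fun j => a (ρ j)) atTop (nhds s) := hat.comp hρ.tendsto_atTop
      have hyρ : Tendsto (fun j => y (ρ j)) atTop (nhds s) := hys.comp hρ.tendsto_atTop
      have hFa : Tendsto (fun j => F (a (ρ j))) atTop (nhds L) :=
        hL.comp (tendsto_nhdsWithin_iff.mpr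
          ⟨haρ, Filter.Eventually.of_forall (fun j => (hpr j).1)⟩)
      have hFy : Tendsto (fun j => F (y (ρ j))) atTop (nhds (F s)) := by
        rcases eq_or_lt_of_le hsmem.2 with hsT | hsT
        · have hys' : ∀ j, y (ρ j) = s := fun j =>
            le_antisymm (hsT ▸ (hyIcc _).2) (hpr j).2
          exact Tendsto.congr (fun j => by rw [hys' j]) tendsto_const_nhds
        · have hcont : Tendsto F (nhdsWithin s (Set.Ici s)) (nhds (F s)) :=
            hrc s ⟨hsmem.1, hsT⟩
          exact hcont.comp (tendsto_nhdsWithin_iff.mpr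
            ⟨hyρ, Filter.Eventually.of_forall (fun j => (hpr j).2)⟩)
      have hdt : Tendsto (fun j => dist (F (y (ρ j))) (F (a (ρ j)))) atTop
          (nhds (dist (F s) L)) := hFy.dist hFa
      have hεd : ε ≤ dist (F s) L :=
        ge_of_tendsto hdt (Filter.Eventually.of_forall (fun j => hd (ρ j)))
      have hne : ¬ Tendsto F (nhdsWithin s (Set.Iio s)) (nhds (F s)) := by
        intro hteq
        have hLs : L = F s := tendsto_nhds_unique hL hteq
        rw [hLs, dist_self] at hεd
        linarith
      obtain ⟨m, hm⟩ := hExh s ⟨hspos, hsmem.2⟩ hne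
      obtain ⟨i, hiN, hti⟩ := hm (χ (ρ m)) ((hχm.comp hρ).le_apply)
      have hsle : s ≤ a (ρ m) := by
        have h2 := le_t_pcIdx (hmono (χ (ρ m))) hiN
          (show t (χ (ρ m)) i ≤ y (ρ m) by rw [hti]; exact (hpr m).2)
        rwa [hti] at h2
      exact absurd hsle (not_le.mpr (hpr m).1)
  exact ⟨⟨key1, key2⟩, ⟨key3, fun h s hs => h.tendsto_at hs⟩⟩
end
end

section
/- Necessity of jump exhaustion for pointwise convergence: if F : [0,T] → ℝ^d is càdlàg with a jump at t ∈ (0,T] (i.e., F_{t−} ≠ F_t), and P^n are partitions with |P^n| → 0 such that t does not belong to all but finitely many of the P^n, then the piecewise constant approximations F^n along P^n do not converge to F at the point t. -/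
/-! Along the infinitely many partitions that miss `s`, the approximation at `s` is `F` evaluated
at the left endpoint of the cell containing `s`; these endpoints approach `s` strictly from the
left as the mesh vanishes, so the approximations converge to the left limit `F_{s-}`, which
would then have to equal `F s`. -/

open scoped ENNReal Classical
open Filter MeasureTheory ProbabilityTheory

noncomputable section

open Topology

def partitionLeft (N : ℕ) (t : ℕ → ℝ) (s : ℝ) : ℝ :=
  t (Nat.findGreatest (fun k => t k ≤ s) N)

theorem exists_partitionLeft_eq {t : ℕ → ℝ} {N : ℕ} {s : ℝ} (h0 : t 0 ≤ s) (hN : s < t N) :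
    ∃ k < N, partitionLeft N t s = t k ∧ t k ≤ s ∧ s < t (k + 1) := by
  have hks := Nat.findGreatest_spec (P := fun k => t k ≤ s) (Nat.zero_le N) h0
  have hkN : Nat.findGreatest (fun k => t k ≤ s) N < N :=
    (Nat.findGreatest_le N).lt_of_ne fun h => hN.not_ge (h ▸ hks)
  exact ⟨_, hkN, rfl, hks, not_le.1 (Nat.findGreatest_is_greatest (Nat.lt_succ_self _) hkN)⟩

theorem tendsto_partitionLeft_nhdsLT {ι : Type*} {l : Filter ι} {N : ι → ℕ} {t : ι → ℕ → ℝ}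
    {s : ℝ} (hmesh : ∀ ε > 0, ∀ᶠ n in l, ∀ i < N n, t n (i + 1) - t n i < ε)
    (hpart : ∀ᶠ n in l, t n 0 ≤ s ∧ s ≤ t n (N n) ∧ ∀ i ≤ N n, t n i ≠ s) :
    Tendsto (fun n => partitionLeft (N n) (t n) s) l (𝓝[<] s) := by
  have hcell : ∀ᶠ n in l, ∃ k < N n,
      partitionLeft (N n) (t n) s = t n k ∧ t n k < s ∧ s < t n (k + 1) := by
    filter_upwards [hpart] with n ⟨h0, hN, hmiss⟩
    obtain ⟨k, hk, heq, hks, hsk⟩ :=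
      exists_partitionLeft_eq h0 (hN.lt_of_ne (hmiss _ le_rfl).symm)
    exact ⟨k, hk, heq, hks.lt_of_ne (hmiss k hk.le), hsk⟩
  refine tendsto_nhdsWithin_iff.2 ⟨Metric.tendsto_nhds.2 fun ε hε => ?_, ?_⟩
  · filter_upwards [hcell, hmesh ε hε] with n ⟨k, hk, heq, hks, hsk⟩ hgap
    rw [heq, Real.dist_eq, abs_sub_lt_iff]
    have := hgap k hk
    constructor <;> linarith
  · filter_upwards [hcell] with n ⟨k, _, heq, hks, _⟩
    rwa [heq]

theorem jump_exhaustion_necessary_general {E : Type*} [NormedAddCommGroup E] (T : ℝ)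
    (F : ℝ → E)
    (hll : ∀ s ∈ Set.Ioc (0 : ℝ) T, ∃ L : E, Tendsto F (nhdsWithin s (Set.Iio s)) (nhds L))
    (N : ℕ → ℕ) (t : ℕ → ℕ → ℝ)
    (h0 : ∀ n, t n 0 = 0) (htop : ∀ n, t n (N n) = T)
    (hmesh : ∀ ε > 0, ∃ m, ∀ n ≥ m, ∀ i < N n, t n (i + 1) - t n i < ε)
    (s : ℝ) (hs : s ∈ Set.Ioc (0 : ℝ) T)
    (hjump : ¬ Tendsto F (nhdsWithin s (Set.Iio s)) (nhds (F s)))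
    (hnot : ¬ ∃ m, ∀ n ≥ m, ∃ i ≤ N n, t n i = s) :
    ¬ Tendsto (fun n => pcApprox F (N n) (t n) s) atTop (nhds (F s)) := by
  intro hconv
  obtain ⟨L, hL⟩ := hll s hs
  have hmiss : ∃ᶠ n in atTop, ∀ i ≤ N n, t n i ≠ s := by
    simpa [Filter.frequently_atTop] using hnot
  let l := atTop ⊓ 𝓟 {n | ∀ i ≤ N n, t n i ≠ s}
  have : l.NeBot := frequently_iff_neBot.1 hmiss
  have hleft : Tendsto (fun n => partitionLeft (N n) (t n) s) l (𝓝[<] s) :=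
    tendsto_partitionLeft_nhdsLT
      (fun ε hε => (eventually_atTop.2 (hmesh ε hε)).filter_mono inf_le_left)
      (eventually_inf_principal.2 (.of_forall fun n hn =>
        ⟨(h0 n).symm ▸ hs.1.le, (htop n).symm ▸ hs.2, hn⟩))
  -- `pcApprox F (N n) (t n) s` unfolds to `F (partitionLeft (N n) (t n) s)`.
  have hLs : L = F s := tendsto_nhds_unique (hL.comp hleft) (hconv.mono_left inf_le_left)
  exact hjump (hLs ▸ hL)

/-- if `F` has a jump at `s` and `s` does not eventually belong to all the
partitions, then the piecewise constant approximations do not converge to `F` at `s`. -/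
theorem jump_exhaustion_necessary {E : Type*} [NormedAddCommGroup E] (T : ℝ) (hT : 0 < T)
    (F : ℝ → E)
    (hrc : ∀ s ∈ Set.Ico (0 : ℝ) T, ContinuousWithinAt F (Set.Ici s) s)
    (hll : ∀ s ∈ Set.Ioc (0 : ℝ) T, ∃ L : E, Tendsto F (nhdsWithin s (Set.Iio s)) (nhds L))
    (N : ℕ → ℕ) (t : ℕ → ℕ → ℝ)
    (hmono : ∀ n, Monotone (t n)) (h0 : ∀ n, t n 0 = 0) (htop : ∀ n, t n (N n) = T)
    (hmesh : ∀ ε > 0, ∃ m, ∀ n ≥ m, ∀ i < N n, t n (i + 1) - t n i < ε)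
    (s : ℝ) (hs : s ∈ Set.Ioc (0 : ℝ) T)
    (hjump : ¬ Tendsto F (nhdsWithin s (Set.Iio s)) (nhds (F s)))
    (hnot : ¬ ∃ m, ∀ n ≥ m, ∃ i ≤ N n, t n i = s) :
    ¬ Tendsto (fun n => pcApprox F (N n) (t n) s) atTop (nhds (F s)) :=
  jump_exhaustion_necessary_general T F hll N t h0 htop hmesh s hs hjump hnot
end
end
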